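/- For n ≥ 1, 1 ≤ k ≤ n, let F(κ) = H_k(κ)/H_{k−1}(κ). Then for every κ in the positive cone (0, ∞)ⁿ one has F(κ)² ≤ Σ_{i=1}^{n} (∂F/∂κ_i)(κ)·κ_i² ≤ (n − k + 1)·F(κ)². -/

import Mathlib

/-- Normalized `j`-th elementary symmetric polynomial `H_j` of `κ ∈ ℝⁿ`,
`H_j(κ) = (n choose j)⁻¹ · Σ_{i₁<⋯<i_j} κ_{i₁}⋯κ_{i_j}`, with `H₀ = 1`. -/
noncomputable def Hsym (n j : ℕ) (κ : Fin n → ℝ) : ℝ :=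
  ((n.choose j : ℝ))⁻¹ *
    ∑ s ∈ Finset.powersetCard j (Finset.univ : Finset (Fin n)), ∏ i ∈ s, κ i

/-- The Garding cone `Γ_k = {κ ∈ ℝⁿ : H₁(κ) > 0, …, H_k(κ) > 0}`. -/
def GardingCone (n k : ℕ) : Set (Fin n → ℝ) :=
  {κ | ∀ j, 1 ≤ j → j ≤ k → 0 < Hsym n j κ}

/-!
Write `e_j` for the elementary symmetric sums of `κ` and `F = c · e_k / e_{k-1}` with
`c = C(n, k-1) / C(n, k) = k / (n - k + 1)`. Differentiating along `κ²` gives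
`Σᵢ κᵢ² ∂ᵢ e_j = e_1 e_j - (j + 1) e_{j+1}`, and the `e_1` terms cancel in the quotient rule:
`Σᵢ ∂ᵢF κᵢ² = c (k e_k² - (k + 1) e_{k-1} e_{k+1}) / e_{k-1}²`. Dropping the last term gives the
upper bound; Newton's inequality `(k + 1)(n - k + 1) e_{k-1} e_{k+1} ≤ k (n - k) e_k²` gives the
lower one. Newton's inequality for positive reals is proved by induction on the number of
variables: adjoining a variable `t` turns `e_j` into `e_j + t e_{j-1}`.
-/

open Finset

namespace Multiset

section CommSemiring

variable {R : Type*} [CommSemiring R]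

@[simp]
theorem esymm_zero (s : Multiset R) : s.esymm 0 = 1 := by
  simp [esymm]

theorem esymm_one (s : Multiset R) : s.esymm 1 = s.sum := by
  simp [esymm, powersetCard_one]

theorem esymm_eq_zero_of_card_lt {s : Multiset R} {n : ℕ} (h : card s < n) : s.esymm n = 0 := by
  simp [esymm, powersetCard_eq_empty n h]

theorem esymm_cons_succ (a : R) (s : Multiset R) (n : ℕ) :
    (a ::ₘ s).esymm (n + 1) = s.esymm (n + 1) + a * s.esymm n := by
  simp [esymm, sum_map_mul_left]

end CommSemiring

theorem sum_map_sum_mul_prod_powersetCard {R : Type*} [CommRing R] (s : Multiset R) (n : ℕ) :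
    ((s.powersetCard n).map fun t ↦ t.sum * t.prod).sum
      = s.sum * s.esymm n - (n + 1) * s.esymm (n + 1) := by
  induction s using Multiset.induction generalizing n with
  | empty => cases n <;> simp [esymm, powersetCard_zero_right]
  | cons a s ih =>
    obtain _ | n := n
    · simp [esymm_one]
    have hcons : ((s.powersetCard n).map fun t ↦ (a ::ₘ t).sum * (a ::ₘ t).prod).sum
        = a ^ 2 * s.esymm n + a * ((s.powersetCard n).map fun t ↦ t.sum * t.prod).sum := by
      simp only [sum_cons, prod_cons, esymm, ← sum_map_mul_left, ← sum_map_add]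
      exact congrArg sum (map_congr rfl fun t _ ↦ by ring)
    rw [powersetCard_cons, map_add, sum_add, map_map, Function.comp_def, hcons, ih, ih,
      esymm_cons_succ, esymm_cons_succ, sum_cons]
    push_cast
    ring

theorem esymm_nonneg {R : Type*} [CommSemiring R] [PartialOrder R] [IsOrderedRing R]
    {s : Multiset R} (hs : ∀ x ∈ s, 0 ≤ x) (n : ℕ) : 0 ≤ s.esymm n :=
  sum_nonneg fun _ ht ↦ by
    obtain ⟨t, hts, rfl⟩ := mem_map.1 ht
    exact prod_nonneg fun x hx ↦ hs x (mem_of_le (mem_powersetCard.1 hts).1 hx)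

theorem esymm_pos {R : Type*} [CommSemiring R] [PartialOrder R] [IsStrictOrderedRing R]
    {s : Multiset R} (hs : ∀ x ∈ s, 0 < x) {n : ℕ} (hn : n ≤ card s) : 0 < s.esymm n := by
  induction s using Multiset.induction generalizing n with
  | empty => simp_all
  | cons a s ih =>
    obtain _ | n := n
    · simp
    have hs' : ∀ x ∈ s, 0 < x := fun x hx ↦ hs x (mem_cons_of_mem hx)
    have := hs a (mem_cons_self a s)
    have := esymm_nonneg (fun x hx ↦ (hs' x hx).le) (n + 1)
    have := ih hs' (n := n) (by simpa using hn)
    rw [esymm_cons_succ]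
    positivity

section Newton

variable {R : Type*} [Field R] [LinearOrder R] [IsStrictOrderedRing R]

/-- `A₀, …, A₃` play `e_{k-1}, …, e_{k+2}` of `m` variables, with `p = k` and `q = m - k + 1`;
adjoining a variable `t` replaces each `A_i` by `A_i + t A_{i-1}`. -/
theorem newton_inequality_step {p q t A₀ A₁ A₂ A₃ : R} (hp : 1 ≤ p) (hq : 1 ≤ q) (ht : 0 ≤ t)
    (hA₀ : 0 ≤ A₀) (hA₁ : 0 < A₁) (hA₂ : 0 < A₂)
    (h₁ : (p + 1) * q * (A₁ * A₃) ≤ p * (q - 1) * A₂ ^ 2)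
    (h₂ : p * (q + 1) * (A₀ * A₂) ≤ (p - 1) * q * A₁ ^ 2) :
    (p + 1) * (q + 1) * ((A₁ + t * A₀) * (A₃ + t * A₂)) ≤ p * q * (A₂ + t * A₁) ^ 2 := by
  have h₃ : (p + 1) * (q + 1) * (A₀ * A₃) ≤ (p - 1) * (q - 1) * (A₁ * A₂) := by
    have hprod := mul_le_mul h₁ h₂ (by positivity)
      (mul_nonneg (mul_nonneg (by linarith) (by linarith)) (sq_nonneg _))
    refine le_of_mul_le_mul_left ?_ (by positivity : 0 < p * q * (A₁ * A₂))
    linear_combination hprod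
  have hsos : 0 ≤ p * (q + 1) * (p * (q - 1) * A₂ ^ 2 - (p + 1) * q * (A₁ * A₃))
      + p * q * t * ((p - 1) * (q - 1) * (A₁ * A₂) - (p + 1) * (q + 1) * (A₀ * A₃))
      + q * (p + 1) * t ^ 2 * ((p - 1) * q * A₁ ^ 2 - p * (q + 1) * (A₀ * A₂))
      + (p * A₂ - q * t * A₁) ^ 2 := by
    have := sub_nonneg.2 h₁
    have := sub_nonneg.2 h₂
    have := sub_nonneg.2 h₃
    have : 0 ≤ q - 1 := by linarith
    have : 0 ≤ p - 1 := by linarith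
    positivity
  refine le_of_mul_le_mul_left ?_ (by positivity : 0 < p * q)
  linear_combination hsos

/-- Newton's inequality `E_k E_{k+2} ≤ E_{k+1}²` for the normalized sums
`E_j = e_j / C(m, j)`, with the binomial coefficients cleared. -/
theorem newton_inequality {s : Multiset R} (hs : ∀ x ∈ s, 0 < x) {k : ℕ} (hk : k + 1 ≤ card s) :
    (k + 2) * ((card s : R) - k) * (s.esymm k * s.esymm (k + 2))
      ≤ (k + 1) * ((card s : R) - k - 1) * s.esymm (k + 1) ^ 2 := by
  induction s using Multiset.induction generalizing k with
  | empty => simp at hk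
  | cons a s ih =>
    have ha : 0 ≤ a := (hs a (mem_cons_self a s)).le
    have hs' : ∀ x ∈ s, 0 < x := fun x hx ↦ hs x (mem_cons_of_mem hx)
    rw [card_cons] at hk ⊢
    push_cast
    obtain rfl | hkm := (Nat.lt_succ_iff.1 hk).eq_or_lt
    · simp [esymm_eq_zero_of_card_lt (s := a ::ₘ s) (n := card s + 2) (by simp)]
    -- `A₀` plays `e_{k-1}`, which is `0` when `k = 0`
    obtain ⟨A₀, hA₀, hcons, h₂⟩ : ∃ A₀, 0 ≤ A₀ ∧ (a ::ₘ s).esymm k = s.esymm k + a * A₀ ∧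
        (k + 1) * ((card s : R) - k + 1) * (A₀ * s.esymm (k + 1))
          ≤ k * ((card s : R) - k) * s.esymm k ^ 2 := by
      obtain _ | i := k
      · exact ⟨0, le_rfl, by simp, by simp⟩
      refine ⟨s.esymm i, esymm_nonneg (fun x hx ↦ (hs' x hx).le) i, esymm_cons_succ a s i, ?_⟩
      have := ih hs' (k := i) (by omega)
      push_cast at this ⊢
      linear_combination this
    have hq : (1 : R) ≤ card s - k := by
      have : (k : R) + 1 ≤ card s := by exact_mod_cast hkm
      linarith
    have := newton_inequality_step (p := (k : R) + 1) (q := (card s : R) - k) (t := a)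
      (A₁ := s.esymm k) (A₂ := s.esymm (k + 1)) (A₃ := s.esymm (k + 2)) (by simp) hq ha hA₀
      (esymm_pos hs' (by omega)) (esymm_pos hs' hkm) (by linear_combination ih hs' hkm)
      (by linear_combination h₂)
    rw [hcons, esymm_cons_succ, esymm_cons_succ]
    linear_combination this

end Newton

end Multiset

theorem ContinuousLinearMap.sum_apply_single_mul {ι : Type*} [Fintype ι] [DecidableEq ι]
    (L : (ι → ℝ) →L[ℝ] ℝ) (v : ι → ℝ) : ∑ i, L (Pi.single i 1) * v i = L v := by
  conv_rhs => rw [← Finset.univ_sum_single v, map_sum]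
  refine sum_congr rfl fun i _ ↦ ?_
  rw [show Pi.single i (v i) = v i • (Pi.single i 1 : ι → ℝ) by
    rw [← Pi.single_smul, smul_eq_mul, mul_one], map_smul, smul_eq_mul, mul_comm]

theorem HasFDerivAt.fun_div {E : Type*} [NormedAddCommGroup E] [NormedSpace ℝ E] {c d : E → ℝ}
    {c' d' : E →L[ℝ] ℝ} {x : E} (hc : HasFDerivAt c c' x) (hd : HasFDerivAt d d' x)
    (hx : d x ≠ 0) :
    HasFDerivAt (fun y ↦ c y / d y) ((d x ^ 2)⁻¹ • (d x • c' - c x • d')) x := by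
  simp only [div_eq_mul_inv]
  refine (hc.fun_mul (d := fun y ↦ (d y)⁻¹) ((hasFDerivAt_inv hx).comp x hd)).congr_fderiv ?_
  ext v
  simp only [add_apply, smul_apply, ContinuousLinearMap.comp_apply,
    ContinuousLinearMap.toSpanSingleton_apply, smul_eq_mul, mul_neg, sub_apply]
  field_simp
  ring

section ElementarySymmetric

variable {ι : Type*} [Fintype ι] [DecidableEq ι]

theorem hasFDerivAt_esymm_map (s : Finset ι) (j : ℕ) (x : ι → ℝ) :
    HasFDerivAt (fun y : ι → ℝ ↦ (s.val.map y).esymm j)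
      (∑ t ∈ s.powersetCard j, ∑ i ∈ t,
        (∏ l ∈ t.erase i, x l) • ContinuousLinearMap.proj (R := ℝ) (φ := fun _ ↦ ℝ) i) x := by
  simp only [Finset.esymm_map_val]
  exact HasFDerivAt.fun_sum fun t _ ↦
    HasFDerivAt.finsetProd (g := fun i (y : ι → ℝ) ↦ y i) fun i _ ↦ hasFDerivAt_apply i x

theorem fderiv_esymm_map_apply_sq (s : Finset ι) (j : ℕ) (x : ι → ℝ) :
    fderiv ℝ (fun y : ι → ℝ ↦ (s.val.map y).esymm j) x (x ^ 2)
      = (s.val.map x).sum * (s.val.map x).esymm j - (j + 1) * (s.val.map x).esymm (j + 1) := by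
  rw [(hasFDerivAt_esymm_map s j x).fderiv, ← Multiset.sum_map_sum_mul_prod_powersetCard]
  simp only [Multiset.powersetCard_map, ← Finset.map_val_val_powersetCard, Multiset.map_map,
    Function.comp_apply, Finset.prod_map_val, Finset.sum_map_val, _root_.sum_apply, smul_apply,
    ContinuousLinearMap.proj_apply, Pi.pow_apply, smul_eq_mul]
  refine sum_congr rfl fun t _ ↦ ?_
  rw [sum_mul]
  refine sum_congr rfl fun i hi ↦ ?_
  rw [← mul_prod_erase t x hi]
  ring

theorem fderiv_esymm_div_apply_sq (s : Finset ι) (k : ℕ) {x : ι → ℝ}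
    (hx : (s.val.map x).esymm k ≠ 0) :
    fderiv ℝ (fun y : ι → ℝ ↦ (s.val.map y).esymm (k + 1) / (s.val.map y).esymm k) x (x ^ 2)
      = ((k + 1) * (s.val.map x).esymm (k + 1) ^ 2
          - (k + 2) * ((s.val.map x).esymm k * (s.val.map x).esymm (k + 2)))
        / (s.val.map x).esymm k ^ 2 := by
  rw [((hasFDerivAt_esymm_map s _ x).fun_div (hasFDerivAt_esymm_map s _ x) hx).fderiv]
  simp only [smul_apply, sub_apply, smul_eq_mul]
  rw [← (hasFDerivAt_esymm_map s _ x).fderiv, ← (hasFDerivAt_esymm_map s _ x).fderiv,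
    fderiv_esymm_map_apply_sq, fderiv_esymm_map_apply_sq]
  push_cast
  field_simp
  ring

end ElementarySymmetric

/-- Here `p = k`, `q = n - k + 1` and `(a, b, d) = (e_k, e_{k-1}, e_{k+1})`. -/
theorem sq_le_and_le_of_newton {p q a b d : ℝ} (hp : 0 < p) (hq : 0 < q) (hb : 0 < b)
    (hd : 0 ≤ d) (h : (p + 1) * q * (b * d) ≤ p * (q - 1) * a ^ 2) :
    (p / q * (a / b)) ^ 2 ≤ p / q * ((p * a ^ 2 - (p + 1) * (b * d)) / b ^ 2) ∧
      p / q * ((p * a ^ 2 - (p + 1) * (b * d)) / b ^ 2) ≤ q * (p / q * (a / b)) ^ 2 := by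
  have hmid : p / q * ((p * a ^ 2 - (p + 1) * (b * d)) / b ^ 2)
      = p / (q * b ^ 2) * (p * a ^ 2 - (p + 1) * (b * d)) := by
    field_simp
  have hleft : (p / q * (a / b)) ^ 2 = p / (q * b ^ 2) * (p * a ^ 2 / q) := by
    field_simp
  have hright : q * (p / q * (a / b)) ^ 2 = p / (q * b ^ 2) * (p * a ^ 2) := by
    field_simp
  rw [hmid, hright, hleft]
  constructor <;> refine mul_le_mul_of_nonneg_left ?_ (by positivity)
  · rw [div_le_iff₀ hq]
    linarith
  · have : 0 ≤ (p + 1) * (b * d) := by positivity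
    linarith

theorem Nat.cast_choose_div_choose_succ {n j : ℕ} (h : j < n) :
    (n.choose j : ℝ) / n.choose (j + 1) = (j + 1) / (n - j) := by
  have hchoose := congrArg (Nat.cast (R := ℝ)) (Nat.choose_succ_right_eq n j)
  push_cast [Nat.cast_sub h.le] at hchoose
  have := Nat.choose_pos (Nat.succ_le_of_lt h)
  rw [div_eq_div_iff (by positivity) (sub_pos.2 (Nat.cast_lt.2 h)).ne']
  linear_combination -hchoose

theorem Hsym_succ_div_Hsym {n j : ℕ} (h : j < n) (κ : Fin n → ℝ) :
    Hsym n (j + 1) κ / Hsym n j κ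
      = (j + 1) / (n - j) * ((univ.val.map κ).esymm (j + 1) / (univ.val.map κ).esymm j) := by
  simp only [Hsym, ← Finset.esymm_map_val, ← Nat.cast_choose_div_choose_succ h, div_eq_mul_inv,
    mul_inv, inv_inv]
  ring

theorem stmt_15_general (n k : ℕ) (hk1 : 1 ≤ k) (hkn : k ≤ n)
    (F : (Fin n → ℝ) → ℝ) (hF : F = fun κ => Hsym n k κ / Hsym n (k - 1) κ) :
    ∀ κ : Fin n → ℝ, (∀ i, 0 < κ i) →
      DifferentiableAt ℝ F κ ∧
      F κ ^ 2 ≤ ∑ i : Fin n, fderiv ℝ F κ (Pi.single i 1) * (κ i) ^ 2 ∧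
      ∑ i : Fin n, fderiv ℝ F κ (Pi.single i 1) * (κ i) ^ 2 ≤ ((n : ℝ) - k + 1) * F κ ^ 2 := by
  intro κ hκ
  obtain ⟨j, rfl⟩ : ∃ j, k = j + 1 := ⟨k - 1, by omega⟩
  set e : ℕ → (Fin n → ℝ) → ℝ := fun i y ↦ (univ.val.map y).esymm i
  have hFe : F = fun y ↦ (j + 1) / (n - j) * (e (j + 1) y / e j y) := by
    simp only [hF, Nat.add_sub_cancel, Hsym_succ_div_Hsym hkn, e]
  have hκ' : ∀ x ∈ univ.val.map κ, 0 < x := by simpa using hκ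
  have he₀ : 0 < e j κ := Multiset.esymm_pos hκ' (by simp; omega)
  have hG := (hasFDerivAt_esymm_map univ (j + 1) κ).fun_div (hasFDerivAt_esymm_map univ j κ) he₀.ne'
  have hsum : ∑ i, fderiv ℝ F κ (Pi.single i 1) * κ i ^ 2 = (j + 1) / (n - j) *
      (((j + 1) * e (j + 1) κ ^ 2 - (j + 1 + 1) * (e j κ * e (j + 2) κ)) / e j κ ^ 2) := by
    rw [show ∑ i, fderiv ℝ F κ (Pi.single i 1) * κ i ^ 2 = fderiv ℝ F κ (κ ^ 2) from
      ContinuousLinearMap.sum_apply_single_mul _ _, hFe, fderiv_const_mul hG.differentiableAt,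
      smul_apply, smul_eq_mul, fderiv_esymm_div_apply_sq univ j he₀.ne']
    ring
  have hnewton := Multiset.newton_inequality hκ' (k := j) (by simpa using hkn)
  simp only [Multiset.card_map, card_val, card_univ, Fintype.card_fin] at hnewton
  obtain ⟨hlow, hup⟩ := sq_le_and_le_of_newton (p := (j : ℝ) + 1) (q := (n : ℝ) - j)
    (a := e (j + 1) κ) (d := e (j + 2) κ) (by positivity) (sub_pos.2 (Nat.cast_lt.2 hkn)) he₀
    (Multiset.esymm_nonneg (fun x hx ↦ (hκ' x hx).le) _) (by linear_combination hnewton)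
  refine ⟨hFe ▸ hG.differentiableAt.const_mul _, ?_, ?_⟩ <;> rw [hsum, hFe]
  · exact hlow
  · rw [show (n : ℝ) - ↑(j + 1) + 1 = n - j by push_cast; ring]
    exact hup

/-- For `1 ≤ k ≤ n` and `F = H_k / H_{k-1}`, at every `κ` in the
positive cone one has `F(κ)² ≤ Σᵢ ∂F/∂κᵢ(κ)·κᵢ² ≤ (n - k + 1)·F(κ)²`. -/
theorem stmt_15 (n k : ℕ) (hn : 1 ≤ n) (hk1 : 1 ≤ k) (hkn : k ≤ n)
    (F : (Fin n → ℝ) → ℝ) (hF : F = fun κ => Hsym n k κ / Hsym n (k - 1) κ) :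
    ∀ κ : Fin n → ℝ, (∀ i, 0 < κ i) →
      DifferentiableAt ℝ F κ ∧
      F κ ^ 2 ≤ ∑ i : Fin n, fderiv ℝ F κ (Pi.single i 1) * (κ i) ^ 2 ∧
      ∑ i : Fin n, fderiv ℝ F κ (Pi.single i 1) * (κ i) ^ 2 ≤ ((n : ℝ) - k + 1) * F κ ^ 2 :=
  stmt_15_general n k hk1 hkn F hF
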